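/- arXiv:math/0307053 — 3 statements merged into one kernel-verified Lean document; each statement's English description precedes it below -/
import Mathlib

section
/- Let H be a subgroup of a finite group G with |G| > 1, π the Plancherel measure on Irr(G), and β = max over nonidentity g ∈ G of |g^G ∩ H|/|g^G|. Then Σ_{ρ∈Irr(G)} |(|H|/|G|)^r·dim(ρ)·⟨χ^ρ, (Ind_H^G 1)^r⟩ − π(ρ)| ≤ |G|^{1/2}·β^r. -/
set_option maxHeartbeats 1000000

open FDRep Module CategoryTheory

section AuxLemmas

open Polynomial
open scoped Classical

variable {G : Type} [Group G] [Fintype G]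

lemma char_conj_eq_inv (V : FDRep ℂ G) (g : G) :
    (starRingEnd ℂ) (V.character g) = V.character g⁻¹ := by
  classical
  set n := Fintype.card G with hn
  have hn0 : 0 < n := Fintype.card_pos
  set f : Module.End ℂ V := V.ρ g with hf
  set f' : Module.End ℂ V := V.ρ g⁻¹ with hf'
  have hf'f : ∀ v : V, f' (f v) = v := by
    intro v
    have : f' * f = 1 := by rw [hf, hf', ← map_mul, inv_mul_cancel, map_one]
    calc f' (f v) = (f' * f) v := rfl
    _ = v := by rw [this]; rfl
  have hfn : f ^ n = 1 := by
    rw [hf, ← map_pow, pow_card_eq_one, map_one]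
  have hsf : Squarefree (X ^ n - C (1 : ℂ)) :=
    (Polynomial.separable_X_pow_sub_C (1 : ℂ)
      (Nat.cast_ne_zero.mpr hn0.ne') one_ne_zero).squarefree
  have haev : Polynomial.aeval f (X ^ n - C (1 : ℂ)) = 0 := by
    simp [map_sub, map_pow, hfn]
  have hss : f.IsSemisimple :=
    Module.End.isSemisimple_of_squarefree_aeval_eq_zero hsf haev
  have hTop : ⨆ μ : ℂ, f.eigenspace μ = ⊤ := by
    have h1 := Module.End.iSup_maxGenEigenspace_eq_top f
    simpa [hss.isFinitelySemisimple.maxGenEigenspace_eq_eigenspace] using h1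
  have hInd := Module.End.eigenspaces_iSupIndep f
  have hInternal : DirectSum.IsInternal f.eigenspace :=
    DirectSum.isInternal_submodule_of_iSupIndep_of_iSup_eq_top hInd hTop
  -- eigenvalues satisfy μ ^ n = 1
  have hroot : ∀ μ : ℂ, f.eigenspace μ ≠ ⊥ → μ ^ n = 1 := by
    intro μ hμ
    obtain ⟨v, hv, hv0⟩ := (Submodule.ne_bot_iff _).mp hμ
    have hev : Module.End.HasEigenvector f μ v := ⟨hv, hv0⟩
    have h2 := hev.pow_apply n
    rw [hfn] at h2
    have h3 : (μ ^ n - 1) • v = 0 := by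
      rw [sub_smul, one_smul, ← h2]; simp
    rcases smul_eq_zero.mp h3 with h | h
    · exact sub_eq_zero.mp h
    · exact absurd h hv0
  have hfin : {μ : ℂ | f.eigenspace μ ≠ ⊥}.Finite := by
    apply Set.Finite.subset (Polynomial.finite_setOf_isRoot
      (p := X ^ n - C (1 : ℂ)) hsf.ne_zero)
    intro μ hμ
    simp only [Set.mem_setOf_eq, Polynomial.IsRoot, Polynomial.eval_sub,
      Polynomial.eval_pow, Polynomial.eval_X, Polynomial.eval_C]
    rw [hroot μ hμ, sub_self]
  have hmf : ∀ μ : ℂ, Set.MapsTo f (f.eigenspace μ) (f.eigenspace μ) := by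
    intro μ v hv
    have := Module.End.mem_eigenspace_iff.mp hv
    exact Module.End.mem_eigenspace_iff.mpr (by rw [this, map_smul, this])
  have key : ∀ μ : ℂ, μ ≠ 0 → ∀ v ∈ f.eigenspace μ, f' v = μ⁻¹ • v := by
    intro μ hμ0 v hv
    have h1 := Module.End.mem_eigenspace_iff.mp hv
    have h2 : f' (f v) = v := hf'f v
    rw [h1, map_smul] at h2
    calc f' v = μ⁻¹ • (μ • f' v) := by rw [smul_smul, inv_mul_cancel₀ hμ0, one_smul]
    _ = μ⁻¹ • v := by rw [h2]
  have hmf' : ∀ μ : ℂ, Set.MapsTo f' (f.eigenspace μ) (f.eigenspace μ) := by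
    intro μ v hv
    have h1 := Module.End.mem_eigenspace_iff.mp hv
    by_cases hμ : f.eigenspace μ = ⊥
    · simp only [SetLike.mem_coe, hμ, Submodule.mem_bot] at hv ⊢
      rw [hv, map_zero]
    · have hμn := hroot μ hμ
      have hμ0 : μ ≠ 0 := by
        rintro rfl; simp [zero_pow hn0.ne'] at hμn
      apply Module.End.mem_eigenspace_iff.mpr
      rw [key μ hμ0 v hv, map_smul, h1, smul_smul, smul_smul,
        inv_mul_cancel₀ hμ0, mul_inv_cancel₀ hμ0]
  -- trace formulas
  have htrf : ∀ μ : ℂ, μ ∈ hfin.toFinset →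
      LinearMap.trace ℂ _ (f.restrict (hmf μ)) = μ * (finrank ℂ (f.eigenspace μ) : ℂ) := by
    intro μ _
    have : f.restrict (hmf μ) = μ • (1 : Module.End ℂ (f.eigenspace μ)) := by
      ext ⟨v, hv⟩
      simp [LinearMap.restrict_apply, Module.End.mem_eigenspace_iff.mp hv]
      exact Module.End.mem_eigenspace_iff.mp hv
    rw [this, map_smul, LinearMap.trace_one, smul_eq_mul]
  have htrf' : ∀ μ : ℂ, μ ∈ hfin.toFinset →
      LinearMap.trace ℂ _ (f'.restrict (hmf' μ)) = μ⁻¹ * (finrank ℂ (f.eigenspace μ) : ℂ) := by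
    intro μ hμ
    rw [Set.Finite.mem_toFinset] at hμ
    have hμn := hroot μ hμ
    have hμ0 : μ ≠ 0 := by
      rintro rfl; simp [zero_pow hn0.ne'] at hμn
    have : f'.restrict (hmf' μ) = μ⁻¹ • (1 : Module.End ℂ (f.eigenspace μ)) := by
      ext ⟨v, hv⟩
      simp [LinearMap.restrict_apply, key μ hμ0 v hv]
      exact key μ hμ0 v hv
    rw [this, map_smul, LinearMap.trace_one, smul_eq_mul]
  have hchar : V.character g = ∑ μ ∈ hfin.toFinset, μ * (finrank ℂ (f.eigenspace μ) : ℂ) := by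
    have := LinearMap.trace_eq_sum_trace_restrict' hInternal hfin hmf
    rw [show V.character g = LinearMap.trace ℂ V f from rfl, this]
    exact Finset.sum_congr rfl htrf
  have hchar' : V.character g⁻¹ =
      ∑ μ ∈ hfin.toFinset, μ⁻¹ * (finrank ℂ (f.eigenspace μ) : ℂ) := by
    have := LinearMap.trace_eq_sum_trace_restrict' hInternal hfin hmf'
    rw [show V.character g⁻¹ = LinearMap.trace ℂ V f' from rfl, this]
    exact Finset.sum_congr rfl htrf'
  rw [hchar, hchar', map_sum]
  apply Finset.sum_congr rfl
  intro μ hμ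
  rw [Set.Finite.mem_toFinset] at hμ
  have hμn := hroot μ hμ
  have hnorm : ‖μ‖ = 1 := Complex.norm_eq_one_of_pow_eq_one hμn hn0.ne'
  rw [map_mul, ← RCLike.inv_eq_conj hnorm]
  congr 1
  simp [Complex.conj_natCast]

lemma conj_count_general (g : G) (Q : G → Prop) :
    (Finset.univ.filter fun t : G => Q (t⁻¹ * g * t)).card =
      (Finset.univ.filter fun y : G => IsConj g y ∧ Q y).card *
        (Finset.univ.filter fun s : G => s⁻¹ * g * s = g).card := by
  have fib : ∀ y : G, IsConj g y →
      (Finset.univ.filter fun t : G => t⁻¹ * g * t = y).card =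
        (Finset.univ.filter fun s : G => s⁻¹ * g * s = g).card := by
    intro y hy
    obtain ⟨c, hc⟩ := isConj_iff.mp hy
    set t0 := c⁻¹ with ht0
    have ht0y : t0⁻¹ * g * t0 = y := by
      rw [ht0, inv_inv]; exact hc
    apply Finset.card_bij' (fun t _ => t * t0⁻¹) (fun s _ => s * t0)
    · intro t ht
      simp only [Finset.mem_filter, Finset.mem_univ, true_and] at ht ⊢
      have : (t * t0⁻¹)⁻¹ * g * (t * t0⁻¹) = t0 * (t⁻¹ * g * t) * t0⁻¹ := by
        group
      rw [this, ht, ← ht0y]; group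
    · intro s hs
      simp only [Finset.mem_filter, Finset.mem_univ, true_and] at hs ⊢
      have : (s * t0)⁻¹ * g * (s * t0) = t0⁻¹ * (s⁻¹ * g * s) * t0 := by group
      rw [this, hs, ht0y]
    · intro t _; group
    · intro s _; group
  rw [Finset.card_eq_sum_card_fiberwise
    (f := fun t : G => t⁻¹ * g * t)
    (t := Finset.univ.filter fun y : G => IsConj g y ∧ Q y)
    (fun t ht => by
      simp only [Finset.coe_filter, Set.mem_setOf_eq, Finset.mem_coe, Finset.mem_filter, Finset.mem_univ, true_and] at ht ⊢
      exact ⟨isConj_iff.mpr ⟨t⁻¹, by group⟩, ht⟩)]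
  have key : ∀ y ∈ (Finset.univ.filter fun y : G => IsConj g y ∧ Q y),
      ((Finset.univ.filter fun t : G => Q (t⁻¹ * g * t)).filter
        (fun t => t⁻¹ * g * t = y)).card =
      (Finset.univ.filter fun s : G => s⁻¹ * g * s = g).card := by
    intro y hy
    simp only [Finset.mem_filter, Finset.mem_univ, true_and] at hy
    rw [Finset.filter_filter]
    rw [show Finset.univ.filter (fun t : G => Q (t⁻¹ * g * t) ∧ t⁻¹ * g * t = y) =
        Finset.univ.filter (fun t : G => t⁻¹ * g * t = y) from
      Finset.filter_congr fun t _ =>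
        ⟨fun h => h.2, fun h => ⟨by rw [h]; exact hy.2, h⟩⟩]
    exact fib y hy.1
  rw [Finset.sum_congr rfl key, Finset.sum_const, smul_eq_mul]

lemma conj_count_general' (g : G) (Q : G → Prop) :
    Nat.card {t : G // Q (t⁻¹ * g * t)} =
      Nat.card {y : G // IsConj g y ∧ Q y} * Nat.card {s : G // s⁻¹ * g * s = g} := by
  have hcard : ∀ (P : G → Prop), Nat.card {y : G // P y} =
      (Finset.univ.filter P).card := by
    intro P
    simp [Nat.card_eq_fintype_card, Fintype.card_subtype]
  rw [hcard, hcard, hcard]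
  convert conj_count_general g Q using 2 <;> congr!

lemma conj_count (H : Subgroup G) (g : G) :
    (Nat.card {t : G // t⁻¹ * g * t ∈ H} : ℝ) / (Fintype.card G : ℝ) =
    (Nat.card {y : G // IsConj g y ∧ y ∈ H} : ℝ) / (Nat.card {y : G // IsConj g y} : ℝ) := by
  have h1 := conj_count_general' g (fun y => y ∈ H)
  have h2 := conj_count_general' g (fun _ : G => True)
  simp only [and_true] at h2
  have hn : Fintype.card G = Nat.card {t : G // True} := by
    rw [Nat.card_eq_fintype_card, Fintype.card_subtype]
    simp
  set a := Nat.card {y : G // IsConj g y ∧ y ∈ H}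
  set b := Nat.card {y : G // IsConj g y}
  set c := Nat.card {s : G // s⁻¹ * g * s = g}
  have hb : 0 < b := by
    apply Nat.card_pos_iff.mpr
    exact ⟨⟨⟨g, IsConj.refl g⟩⟩, Finite.of_fintype _⟩
  have hc : 0 < c := by
    apply Nat.card_pos_iff.mpr
    exact ⟨⟨⟨1, by group⟩⟩, Finite.of_fintype _⟩
  rw [hn, h2, h1]
  push_cast
  rw [mul_div_mul_right _ _ (by exact_mod_cast hc.ne' : (c : ℝ) ≠ 0)]

end AuxLemmas

/-- Theorem 1 of the paper: with `β = max_{g ≠ 1} |g^G ∩ H|/|g^G|` and `π` the Plancherel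
measure, the total (ℓ¹) distance between the normalized decomposition of the `r`-th tensor
power of `Ind_H^G 1` and Plancherel measure is at most `|G|^{1/2}·β^r`. -/
theorem stmt6 {G : Type} [Group G] [Fintype G] [Nontrivial G] (H : Subgroup G) [Fintype H]
    {ιG : Type} [Fintype ιG]
    (IrrG : ιG → FDRep ℂ G)
    (hGsimple : ∀ i, Simple (IrrG i))
    (hGdistinct : ∀ i j, Nonempty (IrrG i ≅ IrrG j) → i = j)
    (hGcomplete : ∀ V : FDRep ℂ G, Simple V → ∃ i, Nonempty (V ≅ IrrG i))
    (β : ℝ)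
    (hβ : IsGreatest {x : ℝ | ∃ g : G, g ≠ 1 ∧
      x = (Nat.card {y : G // IsConj g y ∧ y ∈ H} : ℝ) /
        (Nat.card {y : G // IsConj g y} : ℝ)} β)
    (r : ℕ) :
    ∑ i : ιG,
      norm
        (((Fintype.card H : ℂ) / (Fintype.card G : ℂ)) ^ r * (finrank ℂ (IrrG i) : ℂ) *
            ((Fintype.card G : ℂ)⁻¹ * ∑ g : G, (starRingEnd ℂ) ((IrrG i).character g) *
              ((Fintype.card H : ℂ)⁻¹ *
                (Nat.card {t : G // t⁻¹ * g * t ∈ H} : ℂ)) ^ r) -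
          (finrank ℂ (IrrG i) : ℂ) ^ 2 / (Fintype.card G : ℂ)) ≤
      Real.sqrt (Fintype.card G) * β ^ r := by
  classical
  have hn0 : 0 < Fintype.card G := Fintype.card_pos
  have hh0 : 0 < Fintype.card H := Fintype.card_pos
  set n : ℕ := Fintype.card G with hn
  set nR : ℝ := (n : ℝ) with hnR
  have hnR0 : 0 < nR := by rw [hnR]; exact_mod_cast hn0
  have hnc0 : (n : ℂ) ≠ 0 := Nat.cast_ne_zero.mpr hn0.ne'
  have hhc0 : (Fintype.card H : ℂ) ≠ 0 := Nat.cast_ne_zero.mpr hh0.ne'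
  set D : ℝ := Real.sqrt nR with hD
  have hD0 : 0 < D := Real.sqrt_pos.mpr hnR0
  have hDD : D * D = nR := Real.mul_self_sqrt hnR0.le
  have hDDc : (D : ℂ) * (D : ℂ) = (n : ℂ) := by
    rw [← Complex.ofReal_mul, hDD, hnR]; norm_cast
  have hDc0 : (D : ℂ) ≠ 0 := by
    simpa using hD0.ne'
  have hβ0 : 0 ≤ β := by
    obtain ⟨g, hg, hx⟩ := hβ.1
    rw [hx]; positivity
  -- the counting function
  set N : G → ℕ := fun g => Nat.card {t : G // t⁻¹ * g * t ∈ H} with hNdef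
  have hN1 : N 1 = n := by
    have he : ∀ t : G, t⁻¹ * 1 * t ∈ H := fun t => by
      have h1 : t⁻¹ * 1 * t = 1 := by group
      rw [h1]; exact H.one_mem
    calc N 1 = Nat.card G := Nat.card_congr (Equiv.subtypeUnivEquiv he)
    _ = n := by rw [Nat.card_eq_fintype_card, hn]
  have hNle : ∀ g : G, g ≠ 1 → (N g : ℝ) / nR ≤ β := by
    intro g hg
    rw [hNdef, hnR, hn]
    rw [conj_count H g]
    exact hβ.2 ⟨g, hg, rfl⟩
  -- character conjugates
  have hconj : ∀ (i : ιG) (g : G),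
      (starRingEnd ℂ) ((IrrG i).character g) = (IrrG i).character g⁻¹ :=
    fun i g => char_conj_eq_inv (IrrG i) g
  -- the orthonormal family
  set u : ιG → EuclideanSpace ℂ G := fun i => WithLp.toLp 2 (fun g => (IrrG i).character g / (D : ℂ)) with hu
  have hinner : ∀ (x : EuclideanSpace ℂ G) (i : ιG), (inner ℂ (u i) x : ℂ) =
      (D : ℂ)⁻¹ * ∑ g : G, (starRingEnd ℂ) ((IrrG i).character g) * x g := by
    intro x i
    rw [PiLp.inner_apply, Finset.mul_sum]
    apply Finset.sum_congr rfl
    intro g _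
    rw [RCLike.inner_apply']
    show (starRingEnd ℂ) ((IrrG i).character g / (D : ℂ)) * x g = _
    rw [map_div₀, Complex.conj_ofReal]
    ring
  letI : Invertible ((Fintype.card G : ℂ)) := invertibleOfNonzero (by rw [← hn]; exact hnc0)
  have horth : Orthonormal ℂ u := by
    rw [orthonormal_iff_ite]
    intro i j
    haveI := hGsimple i; haveI := hGsimple j
    letI : Invertible (Nat.card G : ℂ) := invertibleOfNonzero (by rw [Nat.card_eq_fintype_card, ← hn]; exact hnc0)
    have h2 := FDRep.char_orthonormal (IrrG i) (IrrG j)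
    have h3 : (inner ℂ (u i) (u j) : ℂ) =
        (n : ℂ)⁻¹ * ∑ g : G, (IrrG i).character g * (IrrG j).character g⁻¹ := by
      rw [hinner (u j) i]
      have h4 : ∀ g : G, (starRingEnd ℂ) ((IrrG i).character g) * (u j g) =
          (D : ℂ)⁻¹ * ((IrrG i).character g⁻¹ * (IrrG j).character g) := by
        intro g
        rw [hconj]
        show (IrrG i).character g⁻¹ * ((IrrG j).character g / (D : ℂ)) = _
        ring
      rw [Finset.sum_congr rfl (fun g _ => h4 g), ← Finset.mul_sum, ← mul_assoc]
      have h5 : (D : ℂ)⁻¹ * (D : ℂ)⁻¹ = (n : ℂ)⁻¹ := by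
        rw [← mul_inv, hDDc]
      rw [h5]
      congr 1
      exact Fintype.sum_equiv (Equiv.inv G)
        (fun g => (IrrG i).character g⁻¹ * (IrrG j).character g)
        (fun g => (IrrG i).character g * (IrrG j).character g⁻¹)
        (fun g => by simp)
    rw [h3]
    rw [Nat.card_eq_fintype_card] at h2
    have h2' : (n : ℂ)⁻¹ * ∑ g : G, (IrrG i).character g * (IrrG j).character g⁻¹ =
        if Nonempty (IrrG i ≅ IrrG j) then 1 else 0 := h2
    rw [h2']
    have hiff : Nonempty (IrrG i ≅ IrrG j) ↔ i = j :=
      ⟨hGdistinct i j, fun h => h ▸ ⟨Iso.refl _⟩⟩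
    by_cases hij : i = j <;> simp [hiff, hij]
  -- Bessel for the dimensions
  set d : ιG → ℝ := fun i => (finrank ℂ (IrrG i) : ℝ) with hd
  have hd0 : ∀ i, 0 ≤ d i := fun i => Nat.cast_nonneg _
  set x1 : EuclideanSpace ℂ G := WithLp.toLp 2 (fun g => if g = 1 then (D : ℂ) else 0) with hx1
  have hinner_x1 : ∀ i, (inner ℂ (u i) x1 : ℂ) = (d i : ℂ) := by
    intro i
    rw [hinner x1 i]
    rw [Finset.sum_eq_single 1]
    · simp only [hx1, PiLp.toLp_apply, FDRep.char_one, if_pos, Complex.conj_natCast, hd]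
      push_cast
      field_simp
    · intro g _ hg
      rw [hx1]; simp [hg]
    · intro h; exact absurd (Finset.mem_univ 1) h
  have hx1norm : ‖x1‖ ^ 2 = nR := by
    rw [EuclideanSpace.norm_eq, Real.sq_sqrt (by positivity)]
    rw [Finset.sum_eq_single 1]
    · simp only [hx1, PiLp.toLp_apply, if_pos]
      rw [Complex.norm_real, Real.norm_eq_abs, abs_of_nonneg hD0.le, ← hDD]
      ring
    · intro g _ hg
      rw [hx1]; simp [hg]
    · intro h; exact absurd (Finset.mem_univ 1) h
  have hd2 : ∑ i : ιG, (d i) ^ 2 ≤ nR := by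
    have hb := horth.sum_inner_products_le (s := Finset.univ) x1
    rw [hx1norm] at hb
    refine le_trans (le_of_eq ?_) hb
    apply Finset.sum_congr rfl
    intro i _
    rw [hinner_x1 i, Complex.norm_real, Real.norm_eq_abs, abs_of_nonneg (hd0 i)]
  -- the perturbation vector
  set F : EuclideanSpace ℂ G := WithLp.toLp 2 (fun g => if g = 1 then 0 else ((((N g : ℝ) / nR) ^ r : ℝ) : ℂ))
    with hF
  have hFval : ∀ g : G, g ≠ 1 → F g = ((((N g : ℝ) / nR) ^ r : ℝ) : ℂ) := by
    intro g hg; rw [hF]; exact if_neg hg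
  have hF1 : F 1 = 0 := by rw [hF]; exact if_pos rfl
  have hFnorm : ‖F‖ ^ 2 ≤ nR * (β ^ r) ^ 2 := by
    rw [EuclideanSpace.norm_eq, Real.sq_sqrt (by positivity)]
    calc ∑ g : G, ‖F g‖ ^ 2 ≤ ∑ _g : G, (β ^ r) ^ 2 := by
          apply Finset.sum_le_sum
          intro g _
          by_cases hg : g = 1
          · rw [hg, hF1]
            simpa using sq_nonneg (β ^ r)
          · rw [hFval g hg]
            rw [Complex.norm_real, Real.norm_eq_abs, abs_of_nonneg (by positivity)]
            have h1 : ((N g : ℝ) / nR) ^ r ≤ β ^ r :=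
              pow_le_pow_left₀ (by positivity) (hNle g hg) r
            have h2 : (0:ℝ) ≤ ((N g : ℝ) / nR) ^ r := by positivity
            nlinarith
    _ = nR * (β ^ r) ^ 2 := by
          rw [Finset.sum_const, nsmul_eq_mul]
          congr 1
  set S : ιG → ℂ := fun i => ∑ g : G, (starRingEnd ℂ) ((IrrG i).character g) * F g with hS
  have hSdef : ∀ i, S i = ∑ g : G, (starRingEnd ℂ) ((IrrG i).character g) * F g :=
    fun i => rfl
  set A : ιG → ℝ := fun i => ‖S i‖ with hA
  have hAdef : ∀ i, A i = ‖S i‖ := fun i => rfl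
  have hA0 : ∀ i, 0 ≤ A i := fun i => norm_nonneg _
  have hinner_F : ∀ i, (inner ℂ (u i) F : ℂ) = (D : ℂ)⁻¹ * S i := fun i => hinner F i
  have hA2 : ∑ i : ιG, (A i) ^ 2 ≤ nR * (nR * (β ^ r) ^ 2) := by
    have hb := horth.sum_inner_products_le (s := Finset.univ) F
    have hb2 : ∑ i : ιG, ‖(inner ℂ (u i) F : ℂ)‖ ^ 2 = nR⁻¹ * ∑ i : ιG, (A i) ^ 2 := by
      rw [Finset.mul_sum]
      apply Finset.sum_congr rfl
      intro i _
      rw [hinner_F i, norm_mul, norm_inv, Complex.norm_real, Real.norm_eq_abs,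
        abs_of_nonneg hD0.le]
      have hSA : ‖S i‖ = A i := rfl
      rw [mul_pow, hSA]
      have hD2 : D ^ 2 = nR := by rw [← hDD]; ring
      rw [inv_pow, hD2]
    rw [hb2] at hb
    have hle := le_trans hb hFnorm
    calc ∑ i : ιG, (A i) ^ 2 = nR * (nR⁻¹ * ∑ i : ιG, (A i) ^ 2) := by
          field_simp
    _ ≤ nR * (nR * (β ^ r) ^ 2) := mul_le_mul_of_nonneg_left hle hnR0.le
  -- rewrite each summand
  have hsummand : ∀ i : ιG,
      norm
        (((Fintype.card H : ℂ) / (Fintype.card G : ℂ)) ^ r * (finrank ℂ (IrrG i) : ℂ) *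
            ((Fintype.card G : ℂ)⁻¹ * ∑ g : G, (starRingEnd ℂ) ((IrrG i).character g) *
              ((Fintype.card H : ℂ)⁻¹ *
                (Nat.card {t : G // t⁻¹ * g * t ∈ H} : ℂ)) ^ r) -
          (finrank ℂ (IrrG i) : ℂ) ^ 2 / (Fintype.card G : ℂ)) = d i * nR⁻¹ * A i := by
    intro i
    have key : ((Fintype.card H : ℂ) / (Fintype.card G : ℂ)) ^ r * (finrank ℂ (IrrG i) : ℂ) *
            ((Fintype.card G : ℂ)⁻¹ * ∑ g : G, (starRingEnd ℂ) ((IrrG i).character g) *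
              ((Fintype.card H : ℂ)⁻¹ *
                (Nat.card {t : G // t⁻¹ * g * t ∈ H} : ℂ)) ^ r) -
          (finrank ℂ (IrrG i) : ℂ) ^ 2 / (Fintype.card G : ℂ) =
        (finrank ℂ (IrrG i) : ℂ) * (n : ℂ)⁻¹ * S i := by
      rw [← hn]
      have hstep : ∀ g : G, ((Fintype.card H : ℂ) / (n : ℂ)) ^ r *
          ((starRingEnd ℂ) ((IrrG i).character g) *
            ((Fintype.card H : ℂ)⁻¹ * (N g : ℂ)) ^ r) =
          (starRingEnd ℂ) ((IrrG i).character g) * ((N g : ℂ) / (n : ℂ)) ^ r := by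
        intro g
        have hsc : ((Fintype.card H : ℂ) / (n : ℂ)) ^ r *
            ((Fintype.card H : ℂ)⁻¹ * (N g : ℂ)) ^ r = ((N g : ℂ) / (n : ℂ)) ^ r := by
          rw [← mul_pow]
          congr 1
          calc (Fintype.card H : ℂ) / (n : ℂ) * ((Fintype.card H : ℂ)⁻¹ * (N g : ℂ)) =
              ((Fintype.card H : ℂ) * (Fintype.card H : ℂ)⁻¹) * ((N g : ℂ) / (n : ℂ)) := by
                ring
          _ = (N g : ℂ) / (n : ℂ) := by rw [mul_inv_cancel₀ hhc0, one_mul]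
        rw [← hsc]; ring
      calc ((Fintype.card H : ℂ) / (n : ℂ)) ^ r * (finrank ℂ (IrrG i) : ℂ) *
            ((n : ℂ)⁻¹ * ∑ g : G, (starRingEnd ℂ) ((IrrG i).character g) *
              ((Fintype.card H : ℂ)⁻¹ * (N g : ℂ)) ^ r) -
          (finrank ℂ (IrrG i) : ℂ) ^ 2 / (n : ℂ)
          = (finrank ℂ (IrrG i) : ℂ) * (n : ℂ)⁻¹ *
            (∑ g : G, (starRingEnd ℂ) ((IrrG i).character g) * ((N g : ℂ) / (n : ℂ)) ^ r) -
            (finrank ℂ (IrrG i) : ℂ) ^ 2 / (n : ℂ) := by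
            have hsum : ((Fintype.card H : ℂ) / (n : ℂ)) ^ r *
                ∑ g : G, (starRingEnd ℂ) ((IrrG i).character g) *
                  ((Fintype.card H : ℂ)⁻¹ * (N g : ℂ)) ^ r =
                ∑ g : G, (starRingEnd ℂ) ((IrrG i).character g) * ((N g : ℂ) / (n : ℂ)) ^ r := by
              rw [Finset.mul_sum]
              exact Finset.sum_congr rfl (fun g _ => hstep g)
            rw [← hsum]
            ring
      _ = (finrank ℂ (IrrG i) : ℂ) * (n : ℂ)⁻¹ * S i := by
            rw [hSdef i]
            have hsplit : ∑ g : G, (starRingEnd ℂ) ((IrrG i).character g) *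
                ((N g : ℂ) / (n : ℂ)) ^ r =
                (starRingEnd ℂ) ((IrrG i).character 1) * ((N 1 : ℂ) / (n : ℂ)) ^ r +
                ∑ g ∈ Finset.univ.erase 1, (starRingEnd ℂ) ((IrrG i).character g) *
                  ((N g : ℂ) / (n : ℂ)) ^ r :=
              (Finset.add_sum_erase _ _ (Finset.mem_univ 1)).symm
            have hsplit2 : ∑ g : G, (starRingEnd ℂ) ((IrrG i).character g) * F g =
                ∑ g ∈ Finset.univ.erase 1, (starRingEnd ℂ) ((IrrG i).character g) *
                  ((N g : ℂ) / (n : ℂ)) ^ r := by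
              rw [← Finset.add_sum_erase _ _ (Finset.mem_univ 1)]
              rw [hF1, mul_zero, zero_add]
              apply Finset.sum_congr rfl
              intro g hg
              have hg1 : g ≠ 1 := (Finset.mem_erase.mp hg).1
              rw [hFval g hg1]
              congr 1
              push_cast [hnR]
              ring
            rw [hsplit, hsplit2]
            rw [hN1, div_self hnc0, one_pow, FDRep.char_one]
            rw [show (starRingEnd ℂ) ((finrank ℂ (IrrG i) : ℂ)) = (finrank ℂ (IrrG i) : ℂ) by
              simp]
            ring
    rw [key, norm_mul, norm_mul]
    rw [hAdef i]
    rw [show ‖((finrank ℂ (IrrG i) : ℂ))‖ = d i by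
      rw [hd]; exact Complex.norm_natCast _]
    rw [show ‖((n : ℂ)⁻¹)‖ = nR⁻¹ by
      rw [norm_inv, Complex.norm_natCast, hnR]]
  rw [Finset.sum_congr rfl (fun i _ => hsummand i)]
  -- final Cauchy-Schwarz
  have hfin : ∑ i : ιG, d i * nR⁻¹ * A i = nR⁻¹ * ∑ i : ιG, d i * A i := by
    rw [Finset.mul_sum]
    apply Finset.sum_congr rfl
    intro i _
    ring
  rw [hfin]
  have hCS : (∑ i : ιG, d i * A i) ^ 2 ≤ (∑ i : ιG, (d i) ^ 2) * (∑ i : ιG, (A i) ^ 2) :=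
    Finset.sum_mul_sq_le_sq_mul_sq _ _ _
  have hbound : (∑ i : ιG, d i * A i) ^ 2 ≤ (nR * D * β ^ r) ^ 2 := by
    calc (∑ i : ιG, d i * A i) ^ 2 ≤ (∑ i : ιG, (d i) ^ 2) * (∑ i : ιG, (A i) ^ 2) := hCS
    _ ≤ nR * (nR * (nR * (β ^ r) ^ 2)) := by
        apply mul_le_mul hd2 hA2 (Finset.sum_nonneg fun i _ => sq_nonneg _) hnR0.le
    _ = (nR * D * β ^ r) ^ 2 := by
        rw [← hDD]; ring
  have hsum_nonneg : 0 ≤ ∑ i : ιG, d i * A i :=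
    Finset.sum_nonneg fun i _ => mul_nonneg (hd0 i) (hA0 i)
  have hfinal : ∑ i : ιG, d i * A i ≤ nR * D * β ^ r := by
    have h1 := Real.sqrt_le_sqrt hbound
    rwa [Real.sqrt_sq hsum_nonneg, Real.sqrt_sq (by positivity)] at h1
  calc nR⁻¹ * ∑ i : ιG, d i * A i ≤ nR⁻¹ * (nR * D * β ^ r) :=
        mul_le_mul_of_nonneg_left hfinal (by positivity)
  _ = D * β ^ r := by field_simp
  _ = Real.sqrt (Fintype.card G) * β ^ r := by rw [hD, hnR, hn]
end

section
/- Let λ be the function on partitions μ (with |μ| ≤ n, μ having at least one part equal to 1, and μ not equal to the partition of n into n ones) given by f(μ) = (1 − q^{−m₁(μ)})·q^{2μ'₁}, where m₁(μ) is the number of parts of size 1 and μ'₁ the total number of parts. Then f is maximized at μ = (1^{n−1}), i.e. f(μ) ≤ (1 − q^{−(n−1)})·q^{2(n−1)} for all admissible μ, with equality iff μ = (1^{n−1}). -/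
/-!
Write `f(μ) = w(m₁(μ), μ'₁)` with `w(m, k) = (1 - q⁻¹ ^ m) q ^ (2k)`. Positive parts and
`|μ| ≤ n` give `m₁(μ) ≤ μ'₁ ≤ n`, and `μ'₁ = n` would force `μ = (1^n)`, so `m₁(μ) ≤ μ'₁ ≤ n - 1`.
For `q > 1`, `w` is strictly increasing in `m`, and the diagonal `w(k, k) = q^k (q^k - 1)` is
strictly increasing in `k`; hence `w(m, k) ≤ w(k, k) ≤ w(n - 1, n - 1)`, with equality only when
`m = k = n - 1`.
-/

theorem Multiset.card_lt_of_sum_le_of_ne_replicate {μ : Multiset ℕ} {n : ℕ}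
    (hpos : ∀ x ∈ μ, 0 < x) (hsize : μ.sum ≤ n) (hne : μ ≠ replicate n 1) :
    card μ < n := by
  by_cases hones : ∀ x ∈ μ, x = 1
  · have hcard : card μ ≠ n := fun h => hne (eq_replicate.2 ⟨h, hones⟩)
    have : card μ ≤ μ.sum := by simpa using card_nsmul_le_sum (s := μ) (a := 1) hpos
    omega
  · push Not at hones
    obtain ⟨x, hx, hx1⟩ := hones
    have hlt : (μ.map fun _ => 1).sum < (μ.map id).sum :=
      sum_lt_sum hpos ⟨x, hx, Nat.lt_of_le_of_ne (hpos x hx) (Ne.symm hx1)⟩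
    simp only [map_const', sum_replicate, smul_eq_mul, mul_one, map_id] at hlt
    omega

theorem Multiset.count_eq_and_card_eq_iff_eq_replicate {α : Type*} [DecidableEq α]
    {s : Multiset α} {a : α} {N : ℕ} : count a s = N ∧ card s = N ↔ s = replicate N a := by
  refine ⟨fun ⟨hcount, hcard⟩ => eq_replicate.2 ⟨hcard, fun x hx => ?_⟩, fun h => by simp [h]⟩
  exact (count_eq_card.1 (hcount.trans hcard.symm) x hx).symm

noncomputable def weight (q : ℝ) (m k : ℕ) : ℝ := (1 - q⁻¹ ^ m) * q ^ (2 * k)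

section weight

variable {q : ℝ}

theorem weight_strictMono_left (hq : 1 < q) (k : ℕ) : StrictMono (weight q · k) := by
  intro a b hab
  have hpow : q⁻¹ ^ b < q⁻¹ ^ a :=
    pow_right_strictAnti₀ (inv_pos.2 (by linarith)) (inv_lt_one_of_one_lt₀ hq) hab
  simp only [weight]
  gcongr

theorem weight_self (hq : q ≠ 0) (k : ℕ) : weight q k k = q ^ k * (q ^ k - 1) := by
  unfold weight
  rw [inv_pow, mul_comm 2, pow_mul]
  field_simp

theorem weight_self_strictMono (hq : 1 < q) : StrictMono fun k => weight q k k := by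
  refine strictMono_nat_of_lt_succ fun k => ?_
  simp only [weight_self (by positivity : q ≠ 0)]
  have hk : 1 ≤ q ^ k := one_le_pow₀ hq.le
  have hsucc : q ^ k < q ^ (k + 1) := pow_lt_pow_right₀ hq k.lt_succ_self
  nlinarith

theorem weight_le_weight_self_and_eq_iff (hq : 1 < q) {m k N : ℕ} (hmk : m ≤ k) (hkN : k ≤ N) :
    weight q m k ≤ weight q N N ∧ (weight q m k = weight q N N ↔ m = N ∧ k = N) := by
  have hleft := (weight_strictMono_left hq k).monotone hmk
  have hdiag := (weight_self_strictMono hq).monotone hkN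
  refine ⟨hleft.trans hdiag, fun heq => ?_, fun ⟨hm, hk⟩ => by rw [hm, hk]⟩
  have hk : k = N := (weight_self_strictMono hq).injective (by linarith)
  subst hk
  exact ⟨(weight_strictMono_left hq k).injective (by linarith), rfl⟩

end weight

theorem stmt11_general (n : ℕ) (q : ℝ) (hq : 2 ≤ q)
    (μ : Multiset ℕ) (hpos : ∀ x ∈ μ, 0 < x) (hsize : μ.sum ≤ n)
    (hne : μ ≠ Multiset.replicate n 1) :
    (1 - q⁻¹ ^ μ.count 1) * q ^ (2 * Multiset.card μ) ≤
        (1 - q⁻¹ ^ (n - 1)) * q ^ (2 * (n - 1)) ∧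
      ((1 - q⁻¹ ^ μ.count 1) * q ^ (2 * Multiset.card μ) =
          (1 - q⁻¹ ^ (n - 1)) * q ^ (2 * (n - 1)) ↔
        μ = Multiset.replicate (n - 1) 1) := by
  have hcard : Multiset.card μ ≤ n - 1 :=
    Nat.le_sub_one_of_lt (Multiset.card_lt_of_sum_le_of_ne_replicate hpos hsize hne)
  have hmax := weight_le_weight_self_and_eq_iff (by linarith) (Multiset.count_le_card 1 μ) hcard
  exact ⟨hmax.1, hmax.2.trans Multiset.count_eq_and_card_eq_iff_eq_replicate⟩

/-- The function `f(μ) = (1 − q^{−m₁(μ)})·q^{2·(number of parts of μ)}`, over partitions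
`μ` with `|μ| ≤ n`, at least one part equal to `1`, and `μ ≠ (1^n)`, is maximized exactly
at `μ = (1^{n−1})`. -/
theorem stmt11 (n : ℕ) (hn : 2 ≤ n) (q : ℝ) (hq : 2 ≤ q)
    (μ : Multiset ℕ) (hpos : ∀ x ∈ μ, 0 < x) (hsize : μ.sum ≤ n)
    (h1 : 1 ≤ μ.count 1) (hne : μ ≠ Multiset.replicate n 1) :
    (1 - q⁻¹ ^ μ.count 1) * q ^ (2 * Multiset.card μ) ≤
        (1 - q⁻¹ ^ (n - 1)) * q ^ (2 * (n - 1)) ∧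
      ((1 - q⁻¹ ^ μ.count 1) * q ^ (2 * Multiset.card μ) =
          (1 - q⁻¹ ^ (n - 1)) * q ^ (2 * (n - 1)) ↔
        μ = Multiset.replicate (n - 1) 1) :=
  stmt11_general n q hq μ hpos hsize hne
end

section
/- Let g ∈ S_n have n_i cycles of length i and let μ be a composition of n. The proportion of ordered set partitions (B₁,…,B_k) of {1,…,n} with |B_j| = μ_j such that every block B_j is a union of cycles of g equals (μ₁!μ₂!···/n!) · Σ Π_{i≥1} multinomial(n_i; a_i^{(1)}, a_i^{(2)},…), where the sum is over arrays a_i^{(k)} ≥ 0 with Σ_k a_i^{(k)} = n_i and Σ_i i·a_i^{(k)} = μ_k for all k; and this quantity equals |g^{S_n} ∩ S_μ|/|g^{S_n}|. -/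
open scoped Classical
open Finset

section L1
variable {α : Type*} [Fintype α] {K : ℕ}

noncomputable def permFiberEquiv (f₁ f₂ : α → Fin K) :
    {σ : Equiv.Perm α // ∀ x, f₂ (σ x) = f₁ x} ≃
      ∀ j, {x // f₁ x = j} ≃ {x // f₂ x = j} where
  toFun σ j := Equiv.subtypeEquiv σ.1 (fun x => by rw [σ.2 x])
  invFun E := ⟨(Equiv.sigmaFiberEquiv f₁).symm.trans
      ((Equiv.sigmaCongrRight E).trans (Equiv.sigmaFiberEquiv f₂)),
    fun x => (E (f₁ x) ⟨x, rfl⟩).2⟩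
  left_inv σ := by
    apply Subtype.ext; apply Equiv.ext; intro x; rfl
  right_inv E := by
    funext j; apply Equiv.ext; rintro ⟨x, hx⟩
    apply Subtype.ext
    subst hx
    rfl

lemma filter_card_eq_nat_card {γ : Type*} [Fintype γ] (P : γ → Prop) [DecidablePred P] :
    (univ.filter P).card = Nat.card {x // P x} := by
  rw [Nat.card_eq_fintype_card, Fintype.card_subtype]

lemma card_perm_fiber (f₁ f₂ : α → Fin K)
    (h : ∀ j, (univ.filter fun x => f₁ x = j).card = (univ.filter fun x => f₂ x = j).card) :
    Nat.card {σ : Equiv.Perm α // ∀ x, f₂ (σ x) = f₁ x}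
      = ∏ j, ((univ.filter fun x => f₁ x = j).card).factorial := by
  rw [Nat.card_eq_fintype_card, Fintype.card_congr (permFiberEquiv f₁ f₂), Fintype.card_pi]
  refine Finset.prod_congr rfl fun j _ => ?_
  have e : {x // f₁ x = j} ≃ {x // f₂ x = j} :=
    Fintype.equivOfCardEq (by rw [Fintype.card_subtype, Fintype.card_subtype, h j])
  rw [Fintype.card_equiv e, Fintype.card_subtype]

lemma exists_partition {β : Type*} [DecidableEq β] :
    ∀ (K : ℕ) (s : Finset β) (a : Fin K → ℕ), (∑ j, a j) = s.card →
      ∃ B : Fin K → Finset β, (∀ j, B j ⊆ s) ∧ (∀ j, (B j).card = a j) ∧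
        (∀ x ∈ s, ∃! j, x ∈ B j) := by
  intro K
  induction K with
  | zero =>
    intro s a h
    refine ⟨fun j => j.elim0, fun j => j.elim0, fun j => j.elim0, fun x hx => ?_⟩
    have hs : s = ∅ := Finset.card_eq_zero.mp (by simpa using h.symm)
    exact absurd hx (by simp [hs])
  | succ K ih =>
    intro s a h
    rw [Fin.sum_univ_castSucc] at h
    obtain ⟨T, hTs, hTcard⟩ := Finset.exists_subset_card_eq
      (show a (Fin.last K) ≤ s.card by omega)
    obtain ⟨B', hB's, hB'card, hB'cover⟩ := ih (s \ T) (fun j => a j.castSucc)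
      (by show (∑ j : Fin K, a j.castSucc) = _
          rw [Finset.card_sdiff_of_subset hTs, hTcard]; omega)
    refine ⟨Fin.lastCases T B', ?_, ?_, ?_⟩
    · intro j
      induction j using Fin.lastCases with
      | last => simpa using hTs
      | cast j => simpa using (hB's j).trans (Finset.sdiff_subset)
    · intro j
      induction j using Fin.lastCases with
      | last => simpa using hTcard
      | cast j => simpa using hB'card j
    · intro x hx
      by_cases hxT : x ∈ T
      · refine ⟨Fin.last K, by simpa using hxT, ?_⟩
        intro j hj
        induction j using Fin.lastCases with
        | last => rfl
        | cast j =>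
          exfalso
          simp only [Fin.lastCases_castSucc] at hj
          exact (Finset.mem_sdiff.1 (hB's j hj)).2 hxT
      · obtain ⟨j, hj, hjuniq⟩ := hB'cover x (Finset.mem_sdiff.2 ⟨hx, hxT⟩)
        refine ⟨j.castSucc, by simpa using hj, ?_⟩
        intro j' hj'
        induction j' using Fin.lastCases with
        | last => exact absurd (by simpa using hj') hxT
        | cast j' =>
          simp only [Fin.lastCases_castSucc] at hj'
          exact congrArg Fin.castSucc (hjuniq j' hj')

lemma exists_fun_fibers {β : Type*} [Fintype β] [DecidableEq β] {K : ℕ}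
    (a : Fin K → ℕ) (h : (∑ j, a j) = Fintype.card β) :
    ∃ F : β → Fin K, ∀ j, (univ.filter fun x => F x = j).card = a j := by
  obtain ⟨B, hBs, hBcard, hBcover⟩ := exists_partition K univ a (by simpa using h)
  have hex : ∀ x : β, ∃ j, x ∈ B j := fun x => (hBcover x (mem_univ x)).exists
  refine ⟨fun x => (hex x).choose, fun j => ?_⟩
  rw [← hBcard j]
  congr 1
  ext x
  simp only [mem_filter, mem_univ, true_and]
  constructor
  · rintro rfl; exact (hex x).choose_spec
  · intro hxB
    exact ((hBcover x (mem_univ x)).unique (hex x).choose_spec hxB)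
section L2
variable {β : Type*} [Fintype β] [DecidableEq β] {K : ℕ}

lemma card_fun_fibers (a : Fin K → ℕ) (h : (∑ j, a j) = Fintype.card β) :
    (univ.filter fun F : β → Fin K => ∀ j, (univ.filter fun x => F x = j).card = a j).card
      = Nat.multinomial univ a := by
  classical
  obtain ⟨F₀, hF₀⟩ := exists_fun_fibers a h
  have hmaps : ∀ σ ∈ (univ : Finset (Equiv.Perm β)), F₀ ∘ σ ∈
      (univ.filter fun F : β → Fin K => ∀ j, (univ.filter fun x => F x = j).card = a j) := by
    intro σ _
    simp only [mem_filter, mem_univ, true_and]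
    intro j
    have himg : (univ.filter fun x => (F₀ ∘ σ) x = j)
        = Finset.image σ.symm (univ.filter fun y => F₀ y = j) := by
      ext x
      simp only [mem_filter, mem_univ, true_and, Finset.mem_image, Function.comp_apply]
      constructor
      · intro hx; exact ⟨σ x, hx, σ.symm_apply_apply x⟩
      · rintro ⟨y, hy, rfl⟩; simpa using hy
    rw [himg, Finset.card_image_of_injective _ σ.symm.injective, hF₀ j]
  have hfib : ∀ F ∈ (univ.filter fun F : β → Fin K =>
      ∀ j, (univ.filter fun x => F x = j).card = a j),
      (Finset.filter (fun σ : Equiv.Perm β => F₀ ∘ σ = F) univ).card = ∏ j, (a j).factorial := by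
    intro F hF
    simp only [mem_filter, mem_univ, true_and] at hF
    have heq : (Finset.filter (fun σ : Equiv.Perm β => F₀ ∘ σ = F) univ)
        = (univ.filter fun σ : Equiv.Perm β => ∀ x, F₀ (σ x) = F x) := by
      apply Finset.filter_congr; intro σ _; simp [funext_iff, Function.comp]
    rw [heq, filter_card_eq_nat_card]
    exact (card_perm_fiber F F₀ (fun j => by rw [hF j, hF₀ j])).trans
      (Finset.prod_congr rfl fun j _ => by rw [hF j])
  have key : (univ : Finset (Equiv.Perm β)).card =
      (univ.filter fun F : β → Fin K => ∀ j, (univ.filter fun x => F x = j).card = a j).card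
        * ∏ j, (a j).factorial := by
    rw [Finset.card_eq_sum_card_fiberwise hmaps, Finset.sum_congr rfl hfib,
      Finset.sum_const, smul_eq_mul]
  have spec := Nat.multinomial_spec (univ : Finset (Fin K)) a
  rw [h] at spec
  have hpos : (0:ℕ) < ∏ j, (a j).factorial :=
    Finset.prod_pos fun j _ => Nat.factorial_pos _
  apply Nat.eq_of_mul_eq_mul_right hpos
  rw [← key, Finset.card_univ, Fintype.card_perm, ← spec, mul_comm]

end L2
section Bij
variable {n K : ℕ} (μ : Fin K → ℕ)

lemma fiber_card_comp {β : Type*} [Fintype β] (f : β → Fin K) (σ : Equiv.Perm β) (j : Fin K) :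
    (univ.filter fun x => f (σ x) = j).card = (univ.filter fun x => f x = j).card := by
  classical
  have himg : (univ.filter fun x => f (σ x) = j)
      = Finset.image σ.symm (univ.filter fun y => f y = j) := by
    ext x
    simp only [mem_filter, mem_univ, true_and, Finset.mem_image]
    constructor
    · intro hx; exact ⟨σ x, hx, σ.symm_apply_apply x⟩
    · rintro ⟨y, hy, rfl⟩; simpa using hy
  rw [himg, Finset.card_image_of_injective _ σ.symm.injective]

lemma card_B_eq_card_f (q : (Fin K → Finset (Fin n)) → Prop) :
    (univ.filter fun B : Fin K → Finset (Fin n) =>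
        (∀ j, (B j).card = μ j) ∧ (∀ x : Fin n, ∃ j, x ∈ B j) ∧
        (∀ j j', j ≠ j' → Disjoint (B j) (B j')) ∧ q B).card
      = (univ.filter fun f : Fin n → Fin K =>
          (∀ j, (univ.filter fun x => f x = j).card = μ j) ∧
          q (fun j => univ.filter fun x => f x = j)).card := by
  classical
  symm
  apply Finset.card_bij (fun f _ => fun j => univ.filter fun x => f x = j)
  · intro f hf
    simp only [mem_filter, mem_univ, true_and] at hf ⊢
    refine ⟨hf.1, fun x => ⟨f x, by simp⟩, ?_, hf.2⟩
    intro j j' hjj'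
    rw [Finset.disjoint_left]
    intro x hx hx'
    simp only [mem_filter, mem_univ, true_and] at hx hx'
    exact hjj' (hx ▸ hx')
  · intro f hf f' hf' heq
    funext x
    have : x ∈ univ.filter fun y => f y = f x := by simp
    rw [congrFun heq (f x)] at this
    simp only [mem_filter, mem_univ, true_and] at this
    exact this.symm
  · intro B hB
    simp only [mem_filter, mem_univ, true_and] at hB
    obtain ⟨hcard, hcover, hdisj, hq⟩ := hB
    set f : Fin n → Fin K := fun x => (hcover x).choose with hfdef
    have hfmem : ∀ x, x ∈ B (f x) := fun x => (hcover x).choose_spec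
    have hfib : (fun j => univ.filter fun x => f x = j) = B := by
      funext j
      ext x
      simp only [mem_filter, mem_univ, true_and]
      constructor
      · rintro rfl; exact hfmem x
      · intro hx
        by_contra hne
        exact Finset.disjoint_left.1 (hdisj _ _ hne) (hfmem x) hx
    refine ⟨f, ?_, hfib⟩
    simp only [mem_filter, mem_univ, true_and]
    refine ⟨fun j => ?_, ?_⟩
    · rw [congrFun hfib j]; exact hcard j
    · rw [hfib]; exact hq

variable (c : Fin n → Fin K)

set_option maxHeartbeats 1000000 in
lemma card_perm_pred (hc : ∀ j, (Finset.univ.filter fun i => c i = j).card = μ j)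
    (p : (Fin n → Fin K) → Prop) :
    (univ.filter fun σ : Equiv.Perm (Fin n) => p (fun x => c (σ x))).card
      = (univ.filter fun f : Fin n → Fin K =>
          (∀ j, (univ.filter fun x => f x = j).card = μ j) ∧ p f).card * ∏ j, (μ j).factorial := by
  classical
  have hmaps : ∀ σ ∈ (univ.filter fun σ : Equiv.Perm (Fin n) => p (fun x => c (σ x))),
      (fun x => c (σ x)) ∈ (univ.filter fun f : Fin n → Fin K =>
          (∀ j, (univ.filter fun x => f x = j).card = μ j) ∧ p f) := by
    intro σ hσ
    simp only [mem_filter, mem_univ, true_and] at hσ ⊢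
    exact ⟨fun j => (fiber_card_comp c σ j).trans (hc j), hσ⟩
  have hfib : ∀ f ∈ (univ.filter fun f : Fin n → Fin K =>
      (∀ j, (univ.filter fun x => f x = j).card = μ j) ∧ p f),
      (Finset.filter (fun σ : Equiv.Perm (Fin n) => (fun x => c (σ x)) = f)
        (univ.filter fun σ : Equiv.Perm (Fin n) => p (fun x => c (σ x)))).card
        = ∏ j, (μ j).factorial := by
    intro f hf
    simp only [mem_filter, mem_univ, true_and] at hf
    have heq : Finset.filter (fun σ : Equiv.Perm (Fin n) => (fun x => c (σ x)) = f)
          (univ.filter fun σ : Equiv.Perm (Fin n) => p (fun x => c (σ x)))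
        = univ.filter fun σ : Equiv.Perm (Fin n) => ∀ x, c (σ x) = f x := by
      rw [Finset.filter_filter]
      apply Finset.filter_congr
      intro σ _
      simp only [funext_iff]
      constructor
      · rintro ⟨_, h2⟩; exact h2
      · intro h2
        refine ⟨?_, h2⟩
        have : (fun x => c (σ x)) = f := funext h2
        rw [this]; exact hf.2
    rw [heq, filter_card_eq_nat_card]
    exact (card_perm_fiber f c (fun j => by rw [hf.1 j, hc j])).trans
      (Finset.prod_congr rfl fun j _ => by rw [hf.1 j])
  rw [Finset.card_eq_sum_card_fiberwise hmaps, Finset.sum_congr rfl hfib,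
    Finset.sum_const, smul_eq_mul]

end Bij

section Conj
variable {n : ℕ} (g : Equiv.Perm (Fin n))

lemma card_conj_pred (p : Equiv.Perm (Fin n) → Prop) :
    (univ.filter fun σ : Equiv.Perm (Fin n) => p (σ * g * σ⁻¹)).card
      = (univ.filter fun h : Equiv.Perm (Fin n) => IsConj g h ∧ p h).card
        * (univ.filter fun z : Equiv.Perm (Fin n) => z * g = g * z).card := by
  classical
  have hmaps : ∀ σ ∈ (univ.filter fun σ : Equiv.Perm (Fin n) => p (σ * g * σ⁻¹)),
      σ * g * σ⁻¹ ∈ (univ.filter fun h : Equiv.Perm (Fin n) => IsConj g h ∧ p h) := by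
    intro σ hσ
    simp only [mem_filter, mem_univ, true_and] at hσ ⊢
    exact ⟨isConj_iff.2 ⟨σ, rfl⟩, hσ⟩
  rw [Finset.card_eq_sum_card_fiberwise hmaps]
  rw [Finset.sum_congr rfl (fun h hh => ?_), Finset.sum_const, smul_eq_mul]
  simp only [mem_filter, mem_univ, true_and] at hh
  obtain ⟨σ₀, hσ₀⟩ := isConj_iff.1 hh.1
  have hph := hh.2
  have heq : Finset.filter (fun σ : Equiv.Perm (Fin n) => σ * g * σ⁻¹ = h)
        (univ.filter fun σ : Equiv.Perm (Fin n) => p (σ * g * σ⁻¹))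
      = univ.filter fun σ : Equiv.Perm (Fin n) => σ * g * σ⁻¹ = h := by
    rw [Finset.filter_filter]
    apply Finset.filter_congr
    intro σ _
    constructor
    · rintro ⟨_, h2⟩; exact h2
    · intro h2; exact ⟨h2 ▸ hph, h2⟩
  rw [heq]
  symm
  apply Finset.card_bij (fun z _ => σ₀ * z)
  · intro z hz
    simp only [mem_filter, mem_univ, true_and] at hz ⊢
    have hzg : z * g * z⁻¹ = g := by
      rw [hz]; group
    calc σ₀ * z * g * (σ₀ * z)⁻¹ = σ₀ * (z * g * z⁻¹) * σ₀⁻¹ := by group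
    _ = h := by rw [hzg, hσ₀]
  · intro z _ z' _ hzz'
    exact mul_left_cancel hzz'
  · intro σ hσ
    simp only [mem_filter, mem_univ, true_and] at hσ
    refine ⟨σ₀⁻¹ * σ, ?_, by group⟩
    simp only [mem_filter, mem_univ, true_and]
    have h1 : σ * g = h * σ := by rw [← hσ]; group
    have h2 : g * σ₀⁻¹ = σ₀⁻¹ * h := by
      have : σ₀ * g = h * σ₀ := by rw [← hσ₀]; group
      calc g * σ₀⁻¹ = σ₀⁻¹ * (σ₀ * g) * σ₀⁻¹ := by group
      _ = σ₀⁻¹ * (h * σ₀) * σ₀⁻¹ := by rw [this]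
      _ = σ₀⁻¹ * h := by group
    calc σ₀⁻¹ * σ * g = σ₀⁻¹ * (σ * g) := by group
    _ = σ₀⁻¹ * h * σ := by rw [h1]; group
    _ = g * σ₀⁻¹ * σ := by rw [← h2]
    _ = g * (σ₀⁻¹ * σ) := by group

end Conj
/-- The number of cycles of length `i` of a permutation (including fixed points as
cycles of length `1`). -/
noncomputable def numCycles {n : ℕ} (g : Equiv.Perm (Fin n)) (i : ℕ) : ℕ :=
  if i = 1 then (Finset.univ.filter fun x => g x = x).card else g.cycleType.count i
section Orbits
variable {n : ℕ} (g : Equiv.Perm (Fin n))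

def scSetoid : Setoid (Fin n) :=
  ⟨g.SameCycle, ⟨fun x => Equiv.Perm.SameCycle.refl g x,
    fun h => h.symm, fun h h' => h.trans h'⟩⟩

abbrev QOrb := Quotient (scSetoid g)

noncomputable def orbF (q : QOrb g) : Finset (Fin n) :=
  univ.filter fun x => (⟦x⟧ : QOrb g) = q

noncomputable def lenOrb (q : QOrb g) : ℕ := (orbF g q).card

lemma mem_orbF {x : Fin n} {q : QOrb g} : x ∈ orbF g q ↔ (⟦x⟧ : QOrb g) = q := by
  simp [orbF]

lemma out_mem_orbF (q : QOrb g) : q.out ∈ orbF g q := (mem_orbF g).2 (Quotient.out_eq q)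

lemma mk_eq_iff {x y : Fin n} : ((⟦x⟧ : QOrb g) = ⟦y⟧) ↔ g.SameCycle x y := Quotient.eq

lemma lenOrb_pos (q : QOrb g) : 1 ≤ lenOrb g q :=
  Finset.card_pos.2 ⟨q.out, out_mem_orbF g q⟩

lemma lenOrb_le (q : QOrb g) : lenOrb g q ≤ n := by
  have := Finset.card_filter_le (univ : Finset (Fin n)) fun x => (⟦x⟧ : QOrb g) = q
  simpa [lenOrb, orbF] using this

lemma sameCycle_out (x : Fin n) : g.SameCycle (⟦x⟧ : QOrb g).out x := by
  rw [← mk_eq_iff g, Quotient.out_eq]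

lemma mk_g_apply (x : Fin n) : ((⟦g x⟧ : QOrb g) = ⟦x⟧) :=
  (mk_eq_iff g).2 ⟨-1, by simp⟩

/-- An orbit of a fixed point is a singleton. -/
lemma orbF_fixed {x : Fin n} (hx : g x = x) : orbF g (⟦x⟧ : QOrb g) = {x} := by
  ext y
  rw [mem_orbF, Finset.mem_singleton, mk_eq_iff]
  constructor
  · rintro ⟨i, rfl⟩
    have h2 := Equiv.Perm.zpow_apply_eq_self_of_apply_eq_self hx (-i)
    rw [zpow_neg] at h2
    simpa using h2
  · rintro rfl; exact Equiv.Perm.SameCycle.refl g y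

lemma orbF_eq_support_cycleOf {x : Fin n} (hx : g x ≠ x) :
    orbF g (⟦x⟧ : QOrb g) = (g.cycleOf x).support := by
  ext y
  rw [mem_orbF, mk_eq_iff, Equiv.Perm.mem_support_cycleOf_iff]
  constructor
  · intro h; exact ⟨h.symm, Equiv.Perm.mem_support.2 hx⟩
  · intro h; exact h.1.symm
lemma card_orb_len_one :
    (univ.filter fun q : QOrb g => lenOrb g q = 1).card
      = (univ.filter fun x : Fin n => g x = x).card := by
  symm
  apply Finset.card_bij (fun x _ => (⟦x⟧ : QOrb g))
  · intro x hx
    simp only [mem_filter, mem_univ, true_and] at hx ⊢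
    rw [lenOrb, orbF_fixed g hx, Finset.card_singleton]
  · intro x hx x' hx' heq
    simp only [mem_filter, mem_univ, true_and] at hx hx'
    have : x' ∈ orbF g (⟦x⟧ : QOrb g) := (mem_orbF g).2 heq.symm
    rw [orbF_fixed g hx] at this
    exact (Finset.mem_singleton.1 this).symm
  · intro q hq
    simp only [mem_filter, mem_univ, true_and] at hq
    obtain ⟨y, hy⟩ := Finset.card_eq_one.1 hq
    have hyq : (⟦y⟧ : QOrb g) = q := (mem_orbF g).1 (hy ▸ Finset.mem_singleton_self y)
    have hgy : g y = y := by
      have : g y ∈ orbF g q := (mem_orbF g).2 (by rw [mk_g_apply g y, hyq])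
      rw [hy] at this
      exact Finset.mem_singleton.1 this
    exact ⟨y, by simp [hgy], hyq⟩

lemma card_orb_len_ge_two {m : ℕ} (hm : 2 ≤ m) :
    (univ.filter fun q : QOrb g => lenOrb g q = m).card = g.cycleType.count m := by
  classical
  have hcount : g.cycleType.count m
      = (g.cycleFactorsFinset.filter fun c => m = c.support.card).card := by
    rw [Equiv.Perm.cycleType_def, Multiset.count_map, ← Finset.filter_val, Finset.card_def]
    rfl
  rw [hcount]
  -- key: for q with lenOrb q = m, out is not fixed
  have hfix : ∀ q : QOrb g, lenOrb g q = m → g q.out ≠ q.out := by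
    intro q hq hcon
    have h1 : orbF g q = {q.out} := by
      have := orbF_fixed g hcon
      rwa [Quotient.out_eq q] at this
    rw [lenOrb, h1, Finset.card_singleton] at hq
    omega
  apply Finset.card_bij (fun q _ => g.cycleOf q.out)
  · intro q hq
    simp only [mem_filter, mem_univ, true_and] at hq
    have hne := hfix q hq
    have hsupp : (g.cycleOf q.out).support = orbF g q := by
      rw [← orbF_eq_support_cycleOf g hne, Quotient.out_eq q]
    simp only [mem_filter]
    refine ⟨Equiv.Perm.cycleOf_mem_cycleFactorsFinset_iff.2 (Equiv.Perm.mem_support.2 hne), ?_⟩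
    rw [hsupp]
    exact hq.symm
  · intro q hq q' hq' heq
    simp only [mem_filter, mem_univ, true_and] at hq hq'
    have hsupp : (g.cycleOf q.out).support = orbF g q := by
      rw [← orbF_eq_support_cycleOf g (hfix q hq), Quotient.out_eq q]
    have hsupp' : (g.cycleOf q'.out).support = orbF g q' := by
      rw [← orbF_eq_support_cycleOf g (hfix q' hq'), Quotient.out_eq q']
    have horb : orbF g q = orbF g q' := by rw [← hsupp, ← hsupp', heq]
    have : q.out ∈ orbF g q' := horb ▸ out_mem_orbF g q
    rw [mem_orbF] at this
    rw [← this, Quotient.out_eq q]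
  · intro c hc
    simp only [mem_filter] at hc
    obtain ⟨hcf, hcard⟩ := hc
    have hsuppne : c.support.Nonempty := Finset.card_pos.1 (by omega)
    obtain ⟨x, hx⟩ := hsuppne
    have hcx := (Equiv.Perm.mem_cycleFactorsFinset_iff.1 hcf).2 x hx
    have hgx : g x ≠ x := by
      rw [← hcx]
      exact Equiv.Perm.mem_support.1 hx
    have hceq : c = g.cycleOf x := Equiv.Perm.cycle_is_cycleOf hx hcf
    refine ⟨(⟦x⟧ : QOrb g), ?_, ?_⟩
    · simp only [mem_filter, mem_univ, true_and]
      rw [lenOrb, orbF_eq_support_cycleOf g hgx, ← hceq, ← hcard]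
    · have hsc : g.SameCycle (⟦x⟧ : QOrb g).out x := sameCycle_out g x
      rw [hsc.cycleOf_eq, ← hceq]
noncomputable def lenIdx (q : QOrb g) : Fin n :=
  ⟨lenOrb g q - 1, by
    have h1 := lenOrb_pos g q
    have h2 := lenOrb_le g q
    omega⟩

lemma lenIdx_eq_iff (q : QOrb g) (i : Fin n) :
    lenIdx g q = i ↔ lenOrb g q = (i : ℕ) + 1 := by
  have h1 := lenOrb_pos g q
  rw [Fin.ext_iff]
  show lenOrb g q - 1 = (i : ℕ) ↔ _
  omega

lemma fiber_card_eq_sum_len {K : ℕ} (F : QOrb g → Fin K) (j : Fin K) :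
    (univ.filter fun x : Fin n => F ⟦x⟧ = j).card
      = ∑ q ∈ univ.filter (fun q : QOrb g => F q = j), lenOrb g q := by
  rw [Finset.card_eq_sum_card_fiberwise
    (f := fun x : Fin n => (⟦x⟧ : QOrb g))
    (t := univ.filter fun q : QOrb g => F q = j)
    (fun x hx => by
      simp only [Finset.mem_coe, mem_filter, mem_univ, true_and] at hx ⊢
      exact hx)]
  refine Finset.sum_congr rfl fun q hq => ?_
  simp only [mem_filter, mem_univ, true_and] at hq
  rw [lenOrb]
  congr 1
  ext x
  rw [mem_orbF]
  simp only [mem_filter, mem_univ, true_and]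
  constructor
  · rintro ⟨_, h2⟩; exact h2
  · intro h2; exact ⟨by rw [h2, hq], h2⟩

lemma sum_len_eq {K : ℕ} (F : QOrb g → Fin K) (j : Fin K) :
    ∑ q ∈ univ.filter (fun q : QOrb g => F q = j), lenOrb g q
      = ∑ i : Fin n, ((i : ℕ) + 1)
          * (univ.filter fun q : QOrb g => lenIdx g q = i ∧ F q = j).card := by
  rw [← Finset.sum_fiberwise_of_maps_to (g := lenIdx g) (t := univ)
    (fun q _ => mem_univ _) (lenOrb g)]
  apply Finset.sum_congr rfl
  intro i _
  have hset : Finset.filter (fun q => lenIdx g q = i) (univ.filter fun q : QOrb g => F q = j)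
      = univ.filter fun q : QOrb g => lenIdx g q = i ∧ F q = j := by
    rw [Finset.filter_filter]
    apply Finset.filter_congr
    intro q _
    exact and_comm
  rw [hset]
  calc ∑ q ∈ (univ.filter fun q : QOrb g => lenIdx g q = i ∧ F q = j), lenOrb g q
      = ∑ _q ∈ (univ.filter fun q : QOrb g => lenIdx g q = i ∧ F q = j), ((i : ℕ) + 1) := by
        apply Finset.sum_congr rfl
        intro q hq
        simp only [mem_filter, mem_univ, true_and] at hq
        exact (lenIdx_eq_iff g q i).1 hq.1
    _ = _ := by rw [Finset.sum_const, smul_eq_mul, mul_comm]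

lemma card_subtype_filter {γ : Type*} [Fintype γ] (p r : γ → Prop) :
    (univ.filter fun x : {y : γ // p y} => r x.1).card
      = (univ.filter fun x : γ => p x ∧ r x).card := by
  classical
  apply Finset.card_bij (fun x _ => x.1)
  · intro x hx
    simp only [mem_filter, mem_univ, true_and] at hx ⊢
    exact ⟨x.2, hx⟩
  · intro x _ x' _ h
    exact Subtype.ext h
  · intro x hx
    simp only [mem_filter, mem_univ, true_and] at hx
    exact ⟨⟨x, hx.1⟩, by simp [hx.2], rfl⟩

noncomputable def sigmaPiEquiv {K : ℕ} : (QOrb g → Fin K) ≃ ∀ i : Fin n, ({q : QOrb g // lenIdx g q = i} → Fin K) where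
  toFun F := fun _i q => F q.1
  invFun G := fun q => G (lenIdx g q) ⟨q, rfl⟩
  left_inv F := rfl
  right_inv G := by
    funext i q
    obtain ⟨q, hq⟩ := q
    subst hq
    rfl

set_option maxHeartbeats 1000000 in
lemma card_T {K : ℕ} (a : Fin K → Fin n → Fin (n + 1))
    (ha : ∀ i : Fin n, (∑ j, (a j i : ℕ))
      = (univ.filter fun q : QOrb g => lenIdx g q = i).card) :
    (univ.filter fun F : QOrb g → Fin K =>
        ∀ j i, (univ.filter fun q : QOrb g => lenIdx g q = i ∧ F q = j).card = (a j i : ℕ)).card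
      = ∏ i : Fin n, Nat.multinomial univ (fun j : Fin K => (a j i : ℕ)) := by
  classical
  rw [filter_card_eq_nat_card]
  have he : ∀ F : QOrb g → Fin K,
      (∀ j i, (univ.filter fun q : QOrb g => lenIdx g q = i ∧ F q = j).card = (a j i : ℕ))
        ↔ ∀ i j, (univ.filter fun q : {q : QOrb g // lenIdx g q = i} =>
            sigmaPiEquiv g F i q = j).card = (a j i : ℕ) := by
    intro F
    constructor
    · intro h i j
      rw [filter_card_eq_nat_card]
      have h2 := h j i
      rw [filter_card_eq_nat_card] at h2
      rw [← h2]
      exact Nat.card_congr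
        (Equiv.subtypeSubtypeEquivSubtypeInter (fun q => lenIdx g q = i) (fun q => F q = j))
    · intro h j i
      rw [filter_card_eq_nat_card]
      have h2 := h i j
      rw [filter_card_eq_nat_card] at h2
      rw [← h2]
      exact Nat.card_congr
        (Equiv.subtypeSubtypeEquivSubtypeInter (fun q => lenIdx g q = i) (fun q => F q = j)).symm
  have e1 : {F : QOrb g → Fin K // ∀ j i,
        (univ.filter fun q : QOrb g => lenIdx g q = i ∧ F q = j).card = (a j i : ℕ)}
      ≃ ∀ i : Fin n, {G : {q : QOrb g // lenIdx g q = i} → Fin K //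
          ∀ j, (univ.filter fun q => G q = j).card = (a j i : ℕ)} :=
    (Equiv.subtypeEquiv (sigmaPiEquiv g) he).trans Equiv.subtypePiEquivPi
  refine (Nat.card_congr e1).trans ?_
  rw [Nat.card_pi]
  apply Finset.prod_congr rfl
  intro i _
  rw [← filter_card_eq_nat_card]
  have hsum : (∑ j, ((a j i : ℕ))) = Fintype.card {q : QOrb g // lenIdx g q = i} := by
    rw [ha i, Fintype.card_subtype]
  exact card_fun_fibers _ hsum
lemma card_QOrb_le : Fintype.card (QOrb g) ≤ n := by
  have hsurj : Function.Surjective (fun x : Fin n => (⟦x⟧ : QOrb g)) :=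
    fun q => ⟨q.out, Quotient.out_eq q⟩
  simpa using Fintype.card_le_of_surjective _ hsurj

lemma invariant_const {K : ℕ} {f : Fin n → Fin K} (hf : ∀ x, f (g x) = f x) :
    ∀ x y, g.SameCycle x y → f x = f y := by
  have hpow : ∀ (k : ℕ) (x : Fin n), f ((g ^ k) x) = f x := by
    intro k
    induction k with
    | zero => simp
    | succ k ih =>
      intro x
      rw [pow_succ]
      simp only [Equiv.Perm.mul_apply]
      rw [ih (g x), hf x]
  rintro x y hxy
  obtain ⟨k, -, -, hk⟩ := hxy.exists_pow_eq g
  rw [← hk, hpow]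

lemma numCycles_eq (i : Fin n) :
    (univ.filter fun q : QOrb g => lenIdx g q = i).card = numCycles g ((i : ℕ) + 1) := by
  have h0 : (univ.filter fun q : QOrb g => lenIdx g q = i)
      = (univ.filter fun q : QOrb g => lenOrb g q = (i : ℕ) + 1) :=
    Finset.filter_congr fun q _ => lenIdx_eq_iff g q i
  rw [h0]
  by_cases h : (i : ℕ) + 1 = 1
  · rw [h, numCycles, if_pos rfl]
    exact card_orb_len_one g
  · rw [numCycles, if_neg h]
    exact card_orb_len_ge_two g (by omega)

noncomputable def statF {K : ℕ} (f : Fin n → Fin K) : Fin K → Fin n → Fin (n + 1) :=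
  fun j i => ⟨(univ.filter fun q : QOrb g => lenIdx g q = i ∧ f q.out = j).card, by
    have h1 : (univ.filter fun q : QOrb g => lenIdx g q = i ∧ f q.out = j).card
        ≤ Fintype.card (QOrb g) := by
      have := Finset.card_filter_le (univ : Finset (QOrb g))
        fun q => lenIdx g q = i ∧ f q.out = j
      simpa using this
    have h2 := card_QOrb_le g
    omega⟩

set_option maxHeartbeats 2000000 in
lemma card_inv_f {K : ℕ} (μ : Fin K → ℕ) :
    (univ.filter fun f : Fin n → Fin K =>
        (∀ j, (univ.filter fun x => f x = j).card = μ j) ∧ ∀ x, f (g x) = f x).card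
      = ∑ a ∈ univ.filter (fun a : Fin K → Fin n → Fin (n + 1) =>
            (∀ i : Fin n, ∑ j : Fin K, (a j i : ℕ) = numCycles g ((i : ℕ) + 1)) ∧
            (∀ j : Fin K, ∑ i : Fin n, ((i : ℕ) + 1) * (a j i : ℕ) = μ j)),
          ∏ i : Fin n, Nat.multinomial univ (fun j : Fin K => (a j i : ℕ)) := by
  classical
  -- the count per length class for an arbitrary F
  have hcnt : ∀ (f : Fin n → Fin K) (i : Fin n),
      (univ.filter fun q : QOrb g => lenIdx g q = i).card
        = ∑ j : Fin K, (univ.filter fun q : QOrb g => lenIdx g q = i ∧ f q.out = j).card := by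
    intro f i
    rw [Finset.card_eq_sum_card_fiberwise
      (f := fun q : QOrb g => f q.out) (t := (univ : Finset (Fin K)))
      (fun q _ => mem_univ _)]
    refine Finset.sum_congr rfl fun j _ => ?_
    rw [Finset.filter_filter]
  -- the block-size identity for an arbitrary F
  have hblock : ∀ (F : QOrb g → Fin K) (j : Fin K),
      (univ.filter fun x : Fin n => F ⟦x⟧ = j).card
        = ∑ i : Fin n, ((i : ℕ) + 1)
            * (univ.filter fun q : QOrb g => lenIdx g q = i ∧ F q = j).card := by
    intro F j
    rw [fiber_card_eq_sum_len g F j, sum_len_eq g F j]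
  -- maps-to
  have hmaps : ∀ f ∈ (univ.filter fun f : Fin n → Fin K =>
      (∀ j, (univ.filter fun x => f x = j).card = μ j) ∧ ∀ x, f (g x) = f x),
      statF g f ∈ univ.filter (fun a : Fin K → Fin n → Fin (n + 1) =>
            (∀ i : Fin n, ∑ j : Fin K, (a j i : ℕ) = numCycles g ((i : ℕ) + 1)) ∧
            (∀ j : Fin K, ∑ i : Fin n, ((i : ℕ) + 1) * (a j i : ℕ) = μ j)) := by
    intro f hf
    simp only [mem_filter, mem_univ, true_and] at hf ⊢
    constructor
    · intro i
      rw [← numCycles_eq g i, hcnt f i]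
      rfl
    · intro j
      have hF : ∀ x : Fin n, f x = (fun q : QOrb g => f q.out) ⟦x⟧ :=
        fun x => (invariant_const g hf.2 _ _ (sameCycle_out g x)).symm
      have h0 : (univ.filter fun x : Fin n => f x = j)
          = (univ.filter fun x : Fin n => (fun q : QOrb g => f q.out) ⟦x⟧ = j) :=
        Finset.filter_congr fun x _ => by rw [← hF x]
      have := hblock (fun q => f q.out) j
      rw [← h0, hf.1 j] at this
      exact this.symm
  rw [Finset.card_eq_sum_card_fiberwise hmaps]
  refine Finset.sum_congr rfl fun a ha => ?_
  simp only [mem_filter, mem_univ, true_and] at ha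
  rw [← card_T g a (fun i => by rw [ha.1 i, numCycles_eq g i])]
  -- bijection between the fiber and the set of functions on orbits
  apply Finset.card_bij (fun f _ => fun q : QOrb g => f q.out)
  · intro f hf
    simp only [mem_filter, mem_univ, true_and] at hf ⊢
    obtain ⟨-, hstat⟩ := hf
    intro j i
    have := congrArg Fin.val (congrFun (congrFun hstat j) i)
    exact this
  · intro f hf f' hf' heq
    simp only [mem_filter, mem_univ, true_and] at hf hf'
    funext x
    have h1 : f x = f (⟦x⟧ : QOrb g).out :=
      (invariant_const g hf.1.2 _ _ (sameCycle_out g x)).symm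
    have h1' : f' x = f' (⟦x⟧ : QOrb g).out :=
      (invariant_const g hf'.1.2 _ _ (sameCycle_out g x)).symm
    rw [h1, h1', congrFun heq (⟦x⟧ : QOrb g)]
  · intro F hF
    simp only [mem_filter, mem_univ, true_and] at hF
    refine ⟨fun x => F ⟦x⟧, ?_, ?_⟩
    · simp only [mem_filter, mem_univ, true_and]
      have hout : ∀ q : QOrb g, F (⟦q.out⟧ : QOrb g) = F q :=
        fun q => by rw [Quotient.out_eq]
      refine ⟨⟨?_, ?_⟩, ?_⟩
      · -- fiber sizes
        intro j
        have h1 := hblock F j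
        have h2 : ∑ i : Fin n, ((i : ℕ) + 1)
            * (univ.filter fun q : QOrb g => lenIdx g q = i ∧ F q = j).card
            = ∑ i : Fin n, ((i : ℕ) + 1) * ((a j i : ℕ)) :=
          Finset.sum_congr rfl fun i _ => by rw [hF j i]
        rw [h1, h2, ha.2 j]
      · -- invariance
        intro x
        have : ((⟦g x⟧ : QOrb g)) = (⟦x⟧ : QOrb g) := mk_g_apply g x
        rw [this]
      · -- statF equals a
        funext j i
        apply Fin.ext
        show (univ.filter fun q : QOrb g => lenIdx g q = i ∧ F (⟦q.out⟧ : QOrb g) = j).card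
          = (a j i : ℕ)
        have hset : (univ.filter fun q : QOrb g => lenIdx g q = i ∧ F (⟦q.out⟧ : QOrb g) = j)
            = (univ.filter fun q : QOrb g => lenIdx g q = i ∧ F q = j) :=
          Finset.filter_congr fun q _ => by rw [Quotient.out_eq]
        rw [hset]
        exact hF j i
    · funext q
      show F (⟦q.out⟧ : QOrb g) = F q
      rw [Quotient.out_eq]
end Orbits
set_option maxHeartbeats 2000000 in
/-- The proportion of ordered set partitions of `{1,…,n}` of type `μ` each of whose
blocks is a union of cycles of `g` equals
`(μ₁!μ₂!···/n!)·Σ_a Π_i multinomial(n_i; a_i^{(1)},…)`, and this equals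
`|g^{S_n} ∩ S_μ|/|g^{S_n}|` (the Bidigare–Hanlon–Rockmore eigenvalue identity). -/
theorem stmt18 (n K : ℕ) (g : Equiv.Perm (Fin n)) (μ : Fin K → ℕ) (hμ : ∑ j, μ j = n)
    (c : Fin n → Fin K)
    (hc : ∀ j, (Finset.univ.filter fun i => c i = j).card = μ j) :
    ((Finset.univ.filter (fun B : Fin K → Finset (Fin n) =>
          (∀ j, (B j).card = μ j) ∧ (∀ x : Fin n, ∃ j, x ∈ B j) ∧
          (∀ j j', j ≠ j' → Disjoint (B j) (B j')) ∧
          (∀ j, ∀ x ∈ B j, g x ∈ B j))).card : ℝ) /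
        ((Finset.univ.filter (fun B : Fin K → Finset (Fin n) =>
          (∀ j, (B j).card = μ j) ∧ (∀ x : Fin n, ∃ j, x ∈ B j) ∧
          (∀ j j', j ≠ j' → Disjoint (B j) (B j')))).card : ℝ) =
      ((∏ j : Fin K, (μ j).factorial : ℕ) : ℝ) / (n.factorial : ℝ) *
        ∑ a ∈ Finset.univ.filter (fun a : Fin K → Fin n → Fin (n + 1) =>
            (∀ i : Fin n, ∑ j : Fin K, (a j i : ℕ) = numCycles g ((i : ℕ) + 1)) ∧
            (∀ j : Fin K, ∑ i : Fin n, ((i : ℕ) + 1) * (a j i : ℕ) = μ j)),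
          ∏ i : Fin n,
            ((Nat.multinomial Finset.univ fun j : Fin K => (a j i : ℕ)) : ℝ) ∧
    ((Finset.univ.filter (fun B : Fin K → Finset (Fin n) =>
          (∀ j, (B j).card = μ j) ∧ (∀ x : Fin n, ∃ j, x ∈ B j) ∧
          (∀ j j', j ≠ j' → Disjoint (B j) (B j')) ∧
          (∀ j, ∀ x ∈ B j, g x ∈ B j))).card : ℝ) /
        ((Finset.univ.filter (fun B : Fin K → Finset (Fin n) =>
          (∀ j, (B j).card = μ j) ∧ (∀ x : Fin n, ∃ j, x ∈ B j) ∧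
          (∀ j j', j ≠ j' → Disjoint (B j) (B j')))).card : ℝ) =
      (Nat.card {h : Equiv.Perm (Fin n) // IsConj g h ∧ ∀ i, c (h i) = c i} : ℝ) /
        (Nat.card {h : Equiv.Perm (Fin n) // IsConj g h} : ℝ) := by
  classical
  -- B-set to f-set (invariant case)
  have h1 := card_B_eq_card_f (n := n) μ (fun B => ∀ j, ∀ x ∈ B j, g x ∈ B j)
  rw [filter_card_eq_nat_card, filter_card_eq_nat_card] at h1
  have hBI : Nat.card {B : Fin K → Finset (Fin n) //
        (∀ j, (B j).card = μ j) ∧ (∀ x : Fin n, ∃ j, x ∈ B j) ∧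
        (∀ j j', j ≠ j' → Disjoint (B j) (B j')) ∧ (∀ j, ∀ x ∈ B j, g x ∈ B j)}
      = Nat.card {f : Fin n → Fin K //
        (∀ j, (univ.filter fun x => f x = j).card = μ j) ∧ ∀ x, f (g x) = f x} := by
    refine h1.trans (Nat.card_congr (Equiv.subtypeEquivRight fun f => ?_))
    refine and_congr_right fun _ => ?_
    constructor
    · intro h x
      have := h (f x) x (by simp)
      simp only [mem_filter, mem_univ, true_and] at this
      exact this
    · intro h j x hx
      simp only [mem_filter, mem_univ, true_and] at hx ⊢
      rw [h x, hx]
  -- B-set to f-set (total case)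
  have h2 := card_B_eq_card_f (n := n) μ (fun _ => True)
  rw [filter_card_eq_nat_card, filter_card_eq_nat_card] at h2
  have hBT : Nat.card {B : Fin K → Finset (Fin n) //
        (∀ j, (B j).card = μ j) ∧ (∀ x : Fin n, ∃ j, x ∈ B j) ∧
        (∀ j j', j ≠ j' → Disjoint (B j) (B j'))}
      = Nat.card {f : Fin n → Fin K //
        (∀ j, (univ.filter fun x => f x = j).card = μ j)} := by
    refine Eq.trans ?_ (h2.trans (Nat.card_congr (Equiv.subtypeEquivRight fun f => by simp)))
    exact Nat.card_congr (Equiv.subtypeEquivRight fun B => by simp)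
  -- permutation counts
  have hσinvb := card_perm_pred μ c hc (fun f => ∀ x, f (g x) = f x)
  rw [filter_card_eq_nat_card, filter_card_eq_nat_card] at hσinvb
  have hσinv : Nat.card {σ : Equiv.Perm (Fin n) // ∀ x, c (σ (g x)) = c (σ x)}
      = Nat.card {f : Fin n → Fin K //
          (∀ j, (univ.filter fun x => f x = j).card = μ j) ∧ ∀ x, f (g x) = f x}
        * ∏ j : Fin K, (μ j).factorial := hσinvb
  have hσtotb := card_perm_pred μ c hc (fun _ => True)
  rw [Finset.filter_true, Finset.card_univ, Fintype.card_perm, Fintype.card_fin,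
    filter_card_eq_nat_card] at hσtotb
  have hσtot : n.factorial = Nat.card {f : Fin n → Fin K //
      (∀ j, (univ.filter fun x => f x = j).card = μ j)} * ∏ j : Fin K, (μ j).factorial := by
    refine hσtotb.trans ?_
    congr 1
    exact Nat.card_congr (Equiv.subtypeEquivRight fun f => by simp)
  -- conjugation counts
  have hconjIb := card_conj_pred g (fun h => ∀ i : Fin n, c (h i) = c i)
  rw [filter_card_eq_nat_card, filter_card_eq_nat_card] at hconjIb
  have hconjI : Nat.card {σ : Equiv.Perm (Fin n) // ∀ i, c ((σ * g * σ⁻¹) i) = c i}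
      = Nat.card {h : Equiv.Perm (Fin n) // IsConj g h ∧ ∀ i, c (h i) = c i}
        * (univ.filter fun z : Equiv.Perm (Fin n) => z * g = g * z).card := hconjIb
  have hconjTb := card_conj_pred g (fun _ => True)
  rw [Finset.filter_true, Finset.card_univ, Fintype.card_perm, Fintype.card_fin,
    filter_card_eq_nat_card] at hconjTb
  have hconjT : n.factorial = Nat.card {h : Equiv.Perm (Fin n) // IsConj g h}
      * (univ.filter fun z : Equiv.Perm (Fin n) => z * g = g * z).card := by
    refine hconjTb.trans ?_
    congr 1
    exact Nat.card_congr (Equiv.subtypeEquivRight fun h => by simp)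
  -- link the two σ-counts
  have hlink : Nat.card {σ : Equiv.Perm (Fin n) // ∀ x, c (σ (g x)) = c (σ x)}
      = Nat.card {σ : Equiv.Perm (Fin n) // ∀ i, c ((σ * g * σ⁻¹) i) = c i} := by
    apply Nat.card_congr
    apply Equiv.subtypeEquivRight
    intro σ
    constructor
    · intro h i
      have := h (σ⁻¹ i)
      simpa [Equiv.Perm.mul_apply] using this
    · intro h x
      have := h (σ x)
      simpa [Equiv.Perm.mul_apply] using this
  -- main enumeration
  have hSb := card_inv_f g μ
  rw [filter_card_eq_nat_card] at hSb
  have hS : Nat.card {f : Fin n → Fin K //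
        (∀ j, (univ.filter fun x => f x = j).card = μ j) ∧ ∀ x, f (g x) = f x}
      = ∑ a ∈ univ.filter (fun a : Fin K → Fin n → Fin (n + 1) =>
            (∀ i : Fin n, ∑ j : Fin K, (a j i : ℕ) = numCycles g ((i : ℕ) + 1)) ∧
            (∀ j : Fin K, ∑ i : Fin n, ((i : ℕ) + 1) * (a j i : ℕ) = μ j)),
          ∏ i : Fin n, Nat.multinomial univ (fun j : Fin K => (a j i : ℕ)) := hSb
  -- abbreviate
  set NI : ℕ := Nat.card {B : Fin K → Finset (Fin n) //
    (∀ j, (B j).card = μ j) ∧ (∀ x : Fin n, ∃ j, x ∈ B j) ∧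
    (∀ j j', j ≠ j' → Disjoint (B j) (B j')) ∧ (∀ j, ∀ x ∈ B j, g x ∈ B j)} with hNIdef
  set NT : ℕ := Nat.card {B : Fin K → Finset (Fin n) //
    (∀ j, (B j).card = μ j) ∧ (∀ x : Fin n, ∃ j, x ∈ B j) ∧
    (∀ j j', j ≠ j' → Disjoint (B j) (B j'))} with hNTdef
  set A : ℕ := Nat.card {h : Equiv.Perm (Fin n) // IsConj g h ∧ ∀ i, c (h i) = c i} with hAdef
  set C : ℕ := Nat.card {h : Equiv.Perm (Fin n) // IsConj g h} with hCdef
  set Z : ℕ := (univ.filter fun z : Equiv.Perm (Fin n) => z * g = g * z).card with hZdef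
  set S : ℕ := ∑ a ∈ univ.filter (fun a : Fin K → Fin n → Fin (n + 1) =>
            (∀ i : Fin n, ∑ j : Fin K, (a j i : ℕ) = numCycles g ((i : ℕ) + 1)) ∧
            (∀ j : Fin K, ∑ i : Fin n, ((i : ℕ) + 1) * (a j i : ℕ) = μ j)),
          ∏ i : Fin n, Nat.multinomial univ (fun j : Fin K => (a j i : ℕ)) with hSdef
  set P : ℕ := ∏ j : Fin K, (μ j).factorial with hPdef
  have hP_pos : 0 < P := Finset.prod_pos fun j _ => Nat.factorial_pos _
  have hfact_pos : 0 < n.factorial := Nat.factorial_pos n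
  have E1 : NI * P = A * Z := by rw [hBI, ← hσinv, hlink, hconjI]
  have E2 : NT * P = n.factorial := by rw [hBT, hσtot]
  have E4 : C * Z = n.factorial := by rw [hconjT]
  have E5 : NI = S := by rw [hBI, hS]
  have hNT_ne : NT ≠ 0 := by
    intro h
    rw [h, zero_mul] at E2
    exact hfact_pos.ne' E2.symm
  have hZ_ne : Z ≠ 0 := by
    intro h
    rw [h, mul_zero] at E4
    exact hfact_pos.ne' E4.symm
  have hC_ne : C ≠ 0 := by
    intro h
    rw [h, zero_mul] at E4
    exact hfact_pos.ne' E4.symm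
  have hNT0 : (NT : ℝ) ≠ 0 := Nat.cast_ne_zero.2 hNT_ne
  have hC0 : (C : ℝ) ≠ 0 := Nat.cast_ne_zero.2 hC_ne
  have hfact0 : (n.factorial : ℝ) ≠ 0 := Nat.cast_ne_zero.2 hfact_pos.ne'
  constructor
  · -- first identity
    rw [filter_card_eq_nat_card, filter_card_eq_nat_card, ← hNIdef, ← hNTdef]
    have hSR : ((S : ℕ) : ℝ) = ∑ a ∈ univ.filter (fun a : Fin K → Fin n → Fin (n + 1) =>
            (∀ i : Fin n, ∑ j : Fin K, (a j i : ℕ) = numCycles g ((i : ℕ) + 1)) ∧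
            (∀ j : Fin K, ∑ i : Fin n, ((i : ℕ) + 1) * (a j i : ℕ) = μ j)),
          ∏ i : Fin n, ((Nat.multinomial univ fun j : Fin K => (a j i : ℕ)) : ℝ) := by
      rw [hSdef]
      push_cast
      rfl
    rw [div_mul_eq_mul_div, div_eq_div_iff hNT0 hfact0, ← hSR]
    have key : NI * n.factorial = P * S * NT := by
      rw [← E2, ← E5]
      ring
    exact_mod_cast key
  · -- second identity
    rw [filter_card_eq_nat_card, filter_card_eq_nat_card, ← hNIdef, ← hNTdef]
    rw [div_eq_div_iff hNT0 hC0]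
    have key : NI * C = A * NT := by
      apply Nat.eq_of_mul_eq_mul_right (Nat.mul_pos hP_pos (Nat.pos_of_ne_zero hZ_ne))
      calc NI * C * (P * Z) = (NI * P) * (C * Z) := by ring
        _ = (A * Z) * (NT * P) := by rw [E1, E4, ← E2]
        _ = A * NT * (P * Z) := by ring
    exact_mod_cast key
end L1
end
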